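/- arXiv:2001.10485 — 4 statements merged into one kernel-verified Lean document; each statement's English description precedes it below -/
import Mathlib

section
/- Let M be a K×K graph metric matrix with smallest eigenvalue λ_min. Then there exist strictly positive scalars s_1, …, s_K such that, setting S = diag(s_1, …, s_K) and B = S M S^{-1}, all Gershgorin disc left-ends of B are aligned exactly at λ_min, i.e., b_{i,i} − Σ_{j≠i} |b_{i,j}| = λ_min for every i ∈ {1,…,K}. -/
/-! A Perron–Frobenius argument. As `M` has nonpositive off-diagonal entries, replacing an
eigenvector `v` for `lam` by `|v|` does not increase the quadratic form of the positive
semidefinite matrix `M - lam • 1`, which vanishes at `v`; so it vanishes at `|v|`, and `|v|` is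
again an eigenvector. By irreducibility `|v|` is strictly positive: at a zero coordinate `a` the
eigen-equation would read `0 = ∑ j, M a j * |v j| < 0`. Conjugating by `diag (1 / |v|)` yields a
matrix with nonpositive off-diagonal entries and all row sums equal to `lam`, and for such a
matrix the Gershgorin left-end of a row is its row sum. -/

/-- A K×K real matrix is a *graph metric matrix* if it is symmetric positive
definite, has nonpositive off-diagonal entries, strictly positive diagonal
entries, and is irreducible. -/
def IsGraphMetric {K : ℕ} (M : Matrix (Fin K) (Fin K) ℝ) : Prop :=
  M.PosDef ∧ (∀ i j, i ≠ j → M i j ≤ 0) ∧ (∀ i, 0 < M i i) ∧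
    ∀ S : Set (Fin K), S.Nonempty → S ≠ Set.univ →
      ∃ i ∈ S, ∃ j ∉ S, M i j ≠ 0

/-- The set of (real) eigenvalues of a real matrix. -/
def eigenvalueSet {K : ℕ} (M : Matrix (Fin K) (Fin K) ℝ) : Set ℝ :=
  {μ : ℝ | ∃ v : Fin K → ℝ, v ≠ 0 ∧ M.mulVec v = μ • v}

open Matrix Finset

section ZMatrix

variable {n : Type*} [Fintype n]

lemma Matrix.sub_smul_one_mulVec [DecidableEq n] {R : Type*} [CommRing R]
    (M : Matrix n n R) (μ : R) (v : n → R) : (M - μ • 1) *ᵥ v = M *ᵥ v - μ • v := by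
  rw [sub_mulVec, smul_mulVec, one_mulVec]

lemma dotProduct_mulVec_abs_le_of_offDiag_nonpos {A : Matrix n n ℝ}
    (hA : ∀ i j, i ≠ j → A i j ≤ 0) (v : n → ℝ) : |v| ⬝ᵥ A *ᵥ |v| ≤ v ⬝ᵥ A *ᵥ v := by
  simp only [dotProduct, mulVec, mul_sum, Pi.abs_apply]
  refine sum_le_sum fun i _ => sum_le_sum fun j _ => ?_
  rcases eq_or_ne i j with rfl | hij
  · rw [mul_left_comm, abs_mul_abs_self, mul_left_comm]
  · calc |v i| * (A i j * |v j|) = A i j * |v i * v j| := by rw [abs_mul]; ring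
      _ ≤ A i j * (v i * v j) := mul_le_mul_of_nonpos_left (le_abs_self _) (hA i j hij)
      _ = v i * (A i j * v j) := by ring

lemma Matrix.PosSemidef.mulVec_abs_eq_zero {A : Matrix n n ℝ} (hA : A.PosSemidef)
    (hoff : ∀ i j, i ≠ j → A i j ≤ 0) {v : n → ℝ} (hv : A *ᵥ v = 0) : A *ᵥ |v| = 0 := by
  refine (hA.dotProduct_mulVec_zero_iff |v|).mp (le_antisymm ?_ ?_)
  · simpa [hv] using dotProduct_mulVec_abs_le_of_offDiag_nonpos hoff v
  · simpa using hA.dotProduct_mulVec_nonneg |v|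

lemma pos_of_mulVec_eq_smul_of_irreducible {M : Matrix n n ℝ}
    (hoff : ∀ i j, i ≠ j → M i j ≤ 0)
    (hirr : ∀ S : Set n, S.Nonempty → S ≠ Set.univ → ∃ i ∈ S, ∃ j ∉ S, M i j ≠ 0)
    {w : n → ℝ} (hw_nonneg : 0 ≤ w) (hw_ne : w ≠ 0) {μ : ℝ} (hw : M *ᵥ w = μ • w) (i : n) :
    0 < w i := by
  by_contra! hi
  set S : Set n := {k | w k = 0}
  have hS_ne : S.Nonempty := ⟨i, le_antisymm hi (hw_nonneg i)⟩
  have hS_univ : S ≠ Set.univ := fun h =>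
    hw_ne (funext fun k => (h ▸ Set.mem_univ k : k ∈ S))
  obtain ⟨a, ha, b, hb, hab⟩ := hirr S hS_ne hS_univ
  have hterm : ∀ j, M a j * w j ≤ 0 := by
    intro j
    rcases eq_or_ne a j with rfl | haj
    · simp [show w a = 0 from ha]
    · exact mul_nonpos_of_nonpos_of_nonneg (hoff a j haj) (hw_nonneg j)
  have hab_ne : a ≠ b := by rintro rfl; exact hb ha
  have hb_neg : M a b * w b < 0 :=
    mul_neg_of_neg_of_pos ((hoff a b hab_ne).lt_of_ne hab) ((hw_nonneg b).lt_of_ne (Ne.symm hb))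
  have hrow : (M *ᵥ w) a < 0 := by
    simpa [mulVec, dotProduct] using sum_lt_sum (fun j _ => hterm j) ⟨b, mem_univ b, hb_neg⟩
  rw [hw, Pi.smul_apply, show w a = 0 from ha, smul_zero] at hrow
  exact hrow.false

end ZMatrix

lemma posSemidef_sub_smul_one_of_mem_lowerBounds {K : ℕ} {M : Matrix (Fin K) (Fin K) ℝ}
    (hM : M.IsHermitian) {lam : ℝ} (hlam : lam ∈ lowerBounds (eigenvalueSet M)) :
    (M - lam • 1).PosSemidef := by
  have hA : (M - lam • 1).IsHermitian := hM.sub (isHermitian_one.smul (.all lam))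
  refine hA.posSemidef_iff_eigenvalues_nonneg.mpr fun i => ?_
  have hu : ⇑(hA.eigenvectorBasis i) ≠ 0 :=
    (WithLp.ofLp_eq_zero 2).not.mpr (hA.eigenvectorBasis.orthonormal.ne_zero i)
  have hMu : M *ᵥ hA.eigenvectorBasis i = (hA.eigenvalues i + lam) • hA.eigenvectorBasis i := by
    have h := hA.mulVec_eigenvectorBasis i
    rwa [sub_smul_one_mulVec, sub_eq_iff_eq_add, ← add_smul] at h
  exact (le_add_iff_nonneg_left lam).mp (hlam ⟨_, hu, hMu⟩)

lemma IsGraphMetric.exists_pos_eigenvector {K : ℕ} {M : Matrix (Fin K) (Fin K) ℝ}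
    (hM : IsGraphMetric M) {lam : ℝ} (hlam : IsLeast (eigenvalueSet M) lam) :
    ∃ w : Fin K → ℝ, (∀ i, 0 < w i) ∧ M *ᵥ w = lam • w := by
  obtain ⟨hpd, hoff, -, hirr⟩ := hM
  obtain ⟨⟨v, hv_ne, hv⟩, hlow⟩ := hlam
  have hA_off : ∀ i j, i ≠ j → (M - lam • 1) i j ≤ 0 := fun i j hij => by
    simpa [one_apply_ne hij] using hoff i j hij
  have hAv : (M - lam • 1) *ᵥ v = 0 := by rw [sub_smul_one_mulVec, hv, sub_self]
  have hw : M *ᵥ |v| = lam • |v| := sub_eq_zero.mp <| by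
    rw [← sub_smul_one_mulVec]
    exact (posSemidef_sub_smul_one_of_mem_lowerBounds hpd.1 hlow).mulVec_abs_eq_zero hA_off hAv
  exact ⟨|v|, pos_of_mulVec_eq_smul_of_irreducible hoff hirr (abs_nonneg v)
    (mt (Pi.abs_eq_zero v).mp hv_ne) hw, hw⟩

section Gershgorin

variable {n : Type*} [Fintype n] [DecidableEq n]

def gershgorinLeftEnd (B : Matrix n n ℝ) (i : n) : ℝ :=
  B i i - ∑ j ∈ univ.erase i, |B i j|

lemma gershgorinLeftEnd_eq_sum_of_offDiag_nonpos {B : Matrix n n ℝ}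
    (hB : ∀ i j, i ≠ j → B i j ≤ 0) (i : n) : gershgorinLeftEnd B i = ∑ j, B i j := by
  rw [gershgorinLeftEnd, ← add_sum_erase _ _ (mem_univ i),
    sum_congr rfl fun j hj => abs_of_nonpos (hB i j (ne_of_mem_erase hj).symm),
    sum_neg_distrib, sub_neg_eq_add]

lemma gershgorinLeftEnd_diagonal_mul_mul_diagonal_inv {M : Matrix n n ℝ}
    (hoff : ∀ i j, i ≠ j → M i j ≤ 0) {s : n → ℝ} (hs : ∀ i, 0 < s i) {μ : ℝ}
    (hM : M *ᵥ (fun k => (s k)⁻¹) = μ • fun k => (s k)⁻¹) (i : n) :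
    gershgorinLeftEnd (diagonal s * M * diagonal fun k => (s k)⁻¹) i = μ := by
  have hB : ∀ i j, i ≠ j → (diagonal s * M * diagonal fun k => (s k)⁻¹) i j ≤ 0 :=
    fun i j hij => by
      rw [mul_diagonal, diagonal_mul]
      exact mul_nonpos_of_nonpos_of_nonneg
        (mul_nonpos_of_nonneg_of_nonpos (hs i).le (hoff i j hij)) (inv_pos.mpr (hs j)).le
  have hrow := congrFun hM i
  simp only [mulVec, dotProduct, Pi.smul_apply, smul_eq_mul] at hrow
  rw [gershgorinLeftEnd_eq_sum_of_offDiag_nonpos hB]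
  simp only [mul_diagonal, diagonal_mul, mul_assoc, ← mul_sum, hrow]
  field_simp [(hs i).ne']

end Gershgorin

/-- Theorem 1: for a graph metric matrix `M` with smallest eigenvalue `lam`,
there exist strictly positive scalars `s` such that all Gershgorin disc
left-ends of `B = S M S⁻¹` (with `S = diag s`) are aligned exactly at `lam`. -/
theorem gershgorin_disc_alignment
    {K : ℕ} (M : Matrix (Fin K) (Fin K) ℝ) (hM : IsGraphMetric M)
    (lam : ℝ) (hlam : IsLeast (eigenvalueSet M) lam) :
    ∃ s : Fin K → ℝ, (∀ i, 0 < s i) ∧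
      ∀ i,
        (Matrix.diagonal s * M * Matrix.diagonal fun k => (s k)⁻¹) i i -
            ∑ j ∈ Finset.univ.erase i,
              |(Matrix.diagonal s * M * Matrix.diagonal fun k => (s k)⁻¹) i j| =
          lam := by
  obtain ⟨w, hw_pos, hw⟩ := hM.exists_pos_eigenvector hlam
  have hs : ∀ k, 0 < (w k)⁻¹ := fun k => inv_pos.mpr (hw_pos k)
  refine ⟨fun k => (w k)⁻¹, hs, gershgorinLeftEnd_diagonal_mul_mul_diagonal_inv hM.2.1 hs ?_⟩
  simpa only [inv_inv] using hw
end

section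
/- Let M be a K×K graph metric matrix with smallest eigenvalue λ_min > 0. Then there exist strictly positive scalars s_1, …, s_K such that for every ρ with 0 < ρ ≤ λ_min, the scaled Gershgorin linear constraints hold: m_{i,i} ≥ s_i Σ_{j≠i} |m_{i,j}| / s_j + ρ for every i ∈ {1,…,K}. -/
/-! Shifting by the smallest eigenvalue, `N = M - λ • 1` is positive semidefinite with nonpositive
off-diagonal entries. For an eigenvector `v` of `λ` this gives `|v| ⬝ N |v| ≤ v ⬝ N v = 0`, so `|v|`
is again an eigenvector, and irreducibility forces `|v| > 0` (the Perron–Frobenius argument).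
With `s = |v|⁻¹`, row `i` of `M |v| = λ |v|` reads `m_ii = s_i ∑_{j≠i} |m_ij| / s_j + λ`. -/

open Matrix

namespace Matrix

variable {n : Type*} [Fintype n] {A : Matrix n n ℝ}

theorem posSemidef_sub_smul_one_of_isLeast_eigenvalueSet {K : ℕ} {M : Matrix (Fin K) (Fin K) ℝ}
    (hM : M.IsHermitian) {lam : ℝ} (hlam : IsLeast (eigenvalueSet M) lam) :
    (M - lam • 1).PosSemidef := by
  have hN : (M - lam • 1).IsHermitian := hM.sub (isHermitian_one.smul (IsSelfAdjoint.all lam))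
  refine hN.posSemidef_iff_eigenvalues_nonneg.mpr fun i => ?_
  have hne : (⇑(hN.eigenvectorBasis i) : Fin K → ℝ) ≠ 0 := fun h =>
    hN.eigenvectorBasis.orthonormal.ne_zero i (by ext j; exact congrFun h j)
  have hmem : hN.eigenvalues i + lam ∈ eigenvalueSet M := by
    refine ⟨_, hne, ?_⟩
    have := hN.mulVec_eigenvectorBasis i
    rw [sub_mulVec, smul_mulVec, one_mulVec, sub_eq_iff_eq_add] at this
    rw [this, add_smul]
  show (0 : ℝ) ≤ hN.eigenvalues i
  linarith [hlam.2 hmem]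

theorem abs_dotProduct_mulVec_abs_le (hoff : ∀ i j, i ≠ j → A i j ≤ 0) (v : n → ℝ) :
    |v| ⬝ᵥ A *ᵥ |v| ≤ v ⬝ᵥ A *ᵥ v := by
  simp only [dotProduct, mulVec, Finset.mul_sum]
  refine Finset.sum_le_sum fun i _ => Finset.sum_le_sum fun j _ => ?_
  simp only [Pi.abs_apply]
  obtain rfl | hij := eq_or_ne i j
  · rw [mul_left_comm, abs_mul_abs_self, mul_left_comm]
  · have : v i * v j ≤ |v i| * |v j| := abs_mul (v i) (v j) ▸ le_abs_self _
    nlinarith [hoff i j hij]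

theorem PosSemidef.mulVec_abs_eq_zero_s3 (hA : A.PosSemidef) (hoff : ∀ i j, i ≠ j → A i j ≤ 0)
    {v : n → ℝ} (hv : A *ᵥ v = 0) : A *ᵥ |v| = 0 := by
  refine (hA.dotProduct_mulVec_zero_iff |v|).mp (le_antisymm ?_ ?_)
  · simpa [hv] using abs_dotProduct_mulVec_abs_le hoff v
  · simpa using hA.dotProduct_mulVec_nonneg |v|

theorem mulVec_apply_le_of_apply_eq_zero [DecidableEq n] (hoff : ∀ i j, i ≠ j → A i j ≤ 0)
    {u : n → ℝ} (hu : 0 ≤ u) {i : n} (hui : u i = 0) (j : n) :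
    (A *ᵥ u) i ≤ A i j * u j := by
  rw [mulVec, dotProduct, ← Finset.add_sum_erase _ _ (Finset.mem_univ j)]
  refine add_le_of_nonpos_right (Finset.sum_nonpos fun k _ => ?_)
  obtain rfl | hki := eq_or_ne k i
  · simp [hui]
  · exact mul_nonpos_of_nonpos_of_nonneg (hoff i k hki.symm) (hu k)

theorem pos_of_mulVec_eq_smul (hoff : ∀ i j, i ≠ j → A i j ≤ 0)
    (hirr : ∀ S : Set n, S.Nonempty → S ≠ Set.univ → ∃ i ∈ S, ∃ j ∉ S, A i j ≠ 0)
    {u : n → ℝ} (hu : 0 ≤ u) (hu0 : u ≠ 0) {c : ℝ} (hAu : A *ᵥ u = c • u) (i : n) :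
    0 < u i := by
  classical
  by_contra! hi
  have hzero : Set.Nonempty {k | u k = 0} := ⟨i, le_antisymm hi (hu i)⟩
  have hne : {k | u k = 0} ≠ Set.univ := fun h =>
    hu0 (funext fun k => (Set.eq_univ_iff_forall.mp h k : u k = 0))
  -- an edge from the zero set of `u` to its support makes row `k` of `A u` strictly negative
  obtain ⟨k, hk, l, hl, hkl⟩ := hirr _ hzero hne
  have hk : u k = 0 := hk
  have hl : 0 < u l := lt_of_le_of_ne (hu l) (Ne.symm hl)
  have hkl : A k l < 0 := lt_of_le_of_ne (hoff k l (by rintro rfl; exact hl.ne' hk)) hkl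
  have hrow : (A *ᵥ u) k = 0 := by simp [hAu, hk]
  linarith [mulVec_apply_le_of_apply_eq_zero hoff hu hk l, mul_neg_of_neg_of_pos hkl hl]

theorem diag_eq_mul_sum_abs_div_add_of_mulVec_eq_smul [DecidableEq n]
    (hoff : ∀ i j, i ≠ j → A i j ≤ 0) {u : n → ℝ} (hu : ∀ i, 0 < u i) {c : ℝ}
    (hAu : A *ᵥ u = c • u) (i : n) :
    A i i = (u i)⁻¹ * ∑ j ∈ Finset.univ.erase i, |A i j| / (u j)⁻¹ + c := by
  have hrow : A i i * u i + ∑ j ∈ Finset.univ.erase i, A i j * u j = c * u i := by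
    rw [Finset.add_sum_erase _ (fun j => A i j * u j) (Finset.mem_univ i)]
    simpa [mulVec, dotProduct] using congrFun hAu i
  have habs : ∑ j ∈ Finset.univ.erase i, |A i j| / (u j)⁻¹
      = -∑ j ∈ Finset.univ.erase i, A i j * u j := by
    rw [← Finset.sum_neg_distrib]
    refine Finset.sum_congr rfl fun j hj => ?_
    rw [div_inv_eq_mul, abs_of_nonpos (hoff i j (Finset.ne_of_mem_erase hj).symm), neg_mul]
  rw [habs, show ∑ j ∈ Finset.univ.erase i, A i j * u j = c * u i - A i i * u i by linarith]
  field_simp [(hu i).ne']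
  ring

end Matrix

theorem IsGraphMetric.exists_pos_mulVec_eq_smul {K : ℕ} {M : Matrix (Fin K) (Fin K) ℝ}
    (hM : IsGraphMetric M) {lam : ℝ} (hlam : IsLeast (eigenvalueSet M) lam) :
    ∃ u : Fin K → ℝ, (∀ i, 0 < u i) ∧ M *ᵥ u = lam • u := by
  obtain ⟨hPD, hoff, -, hirr⟩ := hM
  obtain ⟨v, hv0, hv⟩ := hlam.1
  have hNoff : ∀ i j, i ≠ j → (M - lam • 1) i j ≤ 0 := fun i j hij => by
    simpa [one_apply_ne hij] using hoff i j hij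
  have hNv : (M - lam • 1) *ᵥ v = 0 := by
    rw [sub_mulVec, hv, smul_mulVec, one_mulVec, sub_self]
  have hNu := (posSemidef_sub_smul_one_of_isLeast_eigenvalueSet hPD.1 hlam).mulVec_abs_eq_zero_s3
    hNoff hNv
  have hMu : M *ᵥ |v| = lam • |v| := by
    rwa [sub_mulVec, smul_mulVec, one_mulVec, sub_eq_zero] at hNu
  have habs0 : |v| ≠ 0 := mt (fun h => funext fun i => abs_eq_zero.mp (congrFun h i)) hv0
  exact ⟨|v|, pos_of_mulVec_eq_smul hoff hirr (abs_nonneg v) habs0 hMu, hMu⟩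

theorem graph_metric_feasible_scaled_gershgorin_general
    {K : ℕ} (M : Matrix (Fin K) (Fin K) ℝ) (hM : IsGraphMetric M)
    (lam : ℝ) (hlam : IsLeast (eigenvalueSet M) lam) :
    ∃ s : Fin K → ℝ, (∀ i, 0 < s i) ∧
      ∀ ρ : ℝ, 0 < ρ → ρ ≤ lam →
        ∀ i, M i i ≥ s i * ∑ j ∈ Finset.univ.erase i, |M i j| / s j + ρ := by
  obtain ⟨u, hu, hMu⟩ := hM.exists_pos_mulVec_eq_smul hlam
  refine ⟨fun i => (u i)⁻¹, fun i => inv_pos.mpr (hu i), fun ρ _ hρ i => ?_⟩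
  have := diag_eq_mul_sum_abs_div_add_of_mulVec_eq_smul hM.2.1 hu hMu i
  linarith

/-- Corollary 1: any graph metric matrix `M`, with smallest eigenvalue
`lam > 0`, satisfies the scaled Gershgorin linear constraints
`M i i ≥ s i * ∑_{j≠i} |M i j| / s j + ρ` for suitable strictly positive
scalars `s` and every `ρ` with `0 < ρ ≤ lam`. -/
theorem graph_metric_feasible_scaled_gershgorin
    {K : ℕ} (M : Matrix (Fin K) (Fin K) ℝ) (hM : IsGraphMetric M)
    (lam : ℝ) (hlam : IsLeast (eigenvalueSet M) lam) (hpos : 0 < lam) :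
    ∃ s : Fin K → ℝ, (∀ i, 0 < s i) ∧
      ∀ ρ : ℝ, 0 < ρ → ρ ≤ lam →
        ∀ i, M i i ≥ s i * ∑ j ∈ Finset.univ.erase i, |M i j| / s j + ρ :=
  graph_metric_feasible_scaled_gershgorin_general M hM lam hlam
end

section
/- Let M be a K×K graph metric matrix with smallest eigenvalue λ_min, and let v be an eigenvector of M for λ_min with all entries strictly positive. If the scalars are updated as s_i = 1/v_i for all i, then M satisfies the updated scaled Gershgorin constraints: for every ρ with 0 < ρ ≤ λ_min and every i ∈ {1,…,K}, m_{i,i} ≥ s_i Σ_{j≠i} |m_{i,j}| / s_j + ρ; in particular, a solution M remains feasible for the constraint set after its scalars are updated from its own first eigenvector. -/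
open Finset
open scoped Matrix

section

variable {ι : Type*} [Fintype ι] [DecidableEq ι]

theorem Matrix.sum_erase_mul_eq_of_mulVec_eq_smul {R : Type*} [CommRing R]
    {M : Matrix ι ι R} {v : ι → R} {lam : R} (heig : M *ᵥ v = lam • v) (i : ι) :
    ∑ j ∈ univ.erase i, M i j * v j = (lam - M i i) * v i := by
  have hrow : ∑ j, M i j * v j = lam * v i := by
    simpa [Matrix.mulVec, dotProduct] using congrFun heig i
  rw [← Finset.sum_erase_add _ _ (mem_univ i)] at hrow
  linear_combination hrow

theorem Matrix.sum_erase_abs_div_inv_eq_of_mulVec_eq_smul {M : Matrix ι ι ℝ} {v : ι → ℝ}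
    {lam : ℝ} (heig : M *ᵥ v = lam • v) {i : ι} (hoff : ∀ j, i ≠ j → M i j ≤ 0) :
    ∑ j ∈ univ.erase i, |M i j| / (v j)⁻¹ = (M i i - lam) * v i := by
  have hterm : ∀ j ∈ univ.erase i, |M i j| / (v j)⁻¹ = -(M i j * v j) := fun j hj => by
    rw [abs_of_nonpos (hoff j (ne_of_mem_erase hj).symm), div_inv_eq_mul, neg_mul]
  rw [sum_congr rfl hterm, sum_neg_distrib, M.sum_erase_mul_eq_of_mulVec_eq_smul heig]
  ring

end

theorem graph_metric_remains_feasible_after_scalar_update_general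
    {K : ℕ} (M : Matrix (Fin K) (Fin K) ℝ) (hM : IsGraphMetric M)
    (lam : ℝ)
    (v : Fin K → ℝ) (hv : ∀ k, 0 < v k) (heig : M.mulVec v = lam • v)
    (s : Fin K → ℝ) (hs : ∀ i, s i = (v i)⁻¹) :
    ∀ ρ : ℝ, 0 < ρ → ρ ≤ lam →
      ∀ i, M i i ≥ s i * ∑ j ∈ Finset.univ.erase i, |M i j| / s j + ρ := by
  intro ρ _ hρlam i
  have hrow := M.sum_erase_abs_div_inv_eq_of_mulVec_eq_smul heig (hM.2.1 i)
  have hscaled : s i * ∑ j ∈ univ.erase i, |M i j| / s j = M i i - lam := by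
    simp only [hs, hrow]
    field_simp [(hv i).ne']
  linarith

/-- Lemma 2: if the scalars are updated as `s i = 1 / v i` from a strictly
positive first eigenvector `v` of the graph metric matrix `M` (with smallest
eigenvalue `lam`), then `M` satisfies the updated scaled Gershgorin
constraints `M i i ≥ s i * ∑_{j≠i} |M i j| / s j + ρ` for every
`0 < ρ ≤ lam`; i.e. `M` remains feasible after the scalar update. -/
theorem graph_metric_remains_feasible_after_scalar_update
    {K : ℕ} (M : Matrix (Fin K) (Fin K) ℝ) (hM : IsGraphMetric M)
    (lam : ℝ) (hlam : IsLeast (eigenvalueSet M) lam)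
    (v : Fin K → ℝ) (hv : ∀ k, 0 < v k) (heig : M.mulVec v = lam • v)
    (s : Fin K → ℝ) (hs : ∀ i, s i = (v i)⁻¹) :
    ∀ ρ : ℝ, 0 < ρ → ρ ≤ lam →
      ∀ i, M i i ≥ s i * ∑ j ∈ Finset.univ.erase i, |M i j| / s j + ρ :=
  graph_metric_remains_feasible_after_scalar_update_general M hM lam v hv heig s hs
end

section
/- Let M be a K×K real symmetric matrix with m_{i,j} ≤ 0 for all i ≠ j, and suppose there exist strictly positive scalars s_1, …, s_K and a real number λ such that all Gershgorin disc left-ends of B = S M S^{-1} (with S = diag(s_1,…,s_K)) are aligned at λ, i.e., b_{i,i} − Σ_{j≠i} |b_{i,j}| = λ for every i. Then λ is exactly the smallest eigenvalue of M: λ = λ_min(M). -/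
/-!
With nonpositive off-diagonal entries, the left end of the `i`-th Gershgorin disc of
`B = S M S⁻¹` is the `i`-th row sum of `B`, so aligned left ends say `B 𝟙 = λ 𝟙`; hence `λ`
is an eigenvalue of `B`, and of the similar matrix `M`. Conversely every real eigenvalue of `M`
is one of `B`, so by Gershgorin's circle theorem it lies in some disc of `B` and is `≥ λ`.
-/

open Matrix Finset

section Gershgorin

variable {n : Type*} [Fintype n] [DecidableEq n]

theorem exists_diag_sub_sum_abs_le_of_mulVec_eq_smul {B : Matrix n n ℝ} {μ : ℝ} {v : n → ℝ}
    (hv : v ≠ 0) (h : B *ᵥ v = μ • v) :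
    ∃ i, B i i - ∑ j ∈ univ.erase i, |B i j| ≤ μ := by
  have hμ : Module.End.HasEigenvalue (toLin' B) μ :=
    Module.End.hasEigenvalue_of_hasEigenvector
      ⟨Module.End.mem_eigenspace_iff.mpr (by rwa [toLin'_apply]), hv⟩
  obtain ⟨i, hi⟩ := eigenvalue_mem_ball hμ
  refine ⟨i, ?_⟩
  rw [Metric.mem_closedBall, Real.dist_eq] at hi
  simp only [Real.norm_eq_abs] at hi
  linarith [neg_abs_le (μ - B i i)]

theorem diag_sub_sum_abs_eq_sum_of_nonpos {B : Matrix n n ℝ} (i : n)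
    (hoff : ∀ j, j ≠ i → B i j ≤ 0) :
    B i i - ∑ j ∈ univ.erase i, |B i j| = ∑ j, B i j := by
  have habs : ∑ j ∈ univ.erase i, |B i j| = -∑ j ∈ univ.erase i, B i j := by
    rw [← sum_neg_distrib]
    exact sum_congr rfl fun j hj => abs_of_nonpos (hoff j (ne_of_mem_erase hj))
  rw [habs, ← add_sum_erase _ _ (mem_univ i)]
  ring

theorem mulVec_one_eq_smul_of_diag_sub_sum_abs_eq {B : Matrix n n ℝ} {lam : ℝ}
    (hoff : ∀ i j, i ≠ j → B i j ≤ 0)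
    (halign : ∀ i, B i i - ∑ j ∈ univ.erase i, |B i j| = lam) :
    B *ᵥ 1 = lam • 1 := by
  funext i
  have hrow := diag_sub_sum_abs_eq_sum_of_nonpos i fun j hji => hoff i j hji.symm
  simp only [mulVec, dotProduct, Pi.one_apply, mul_one, Pi.smul_apply, smul_eq_mul]
  rw [← hrow, halign i]

end Gershgorin

section Similarity

variable {n : Type*} [Fintype n] [DecidableEq n]

theorem conj_mulVec_mulVec_eq_smul {P Q M : Matrix n n ℝ} {μ : ℝ} {v : n → ℝ}
    (hQP : Q * P = 1) (h : M *ᵥ v = μ • v) :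
    (P * M * Q) *ᵥ (P *ᵥ v) = μ • (P *ᵥ v) := by
  rw [mulVec_mulVec, Matrix.mul_assoc, Matrix.mul_assoc, hQP, Matrix.mul_one, ← mulVec_mulVec,
    h, mulVec_smul]

theorem mulVec_ne_zero_of_mul_eq_one {P Q : Matrix n n ℝ} {v : n → ℝ}
    (hQP : Q * P = 1) (hv : v ≠ 0) : P *ᵥ v ≠ 0 := by
  intro h
  apply hv
  rw [← one_mulVec v, ← hQP, ← mulVec_mulVec, h, mulVec_zero]

theorem diagonal_inv_mul_diagonal {s : n → ℝ} (hs : ∀ i, s i ≠ 0) :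
    diagonal (fun k => (s k)⁻¹) * diagonal s = 1 := by
  rw [diagonal_mul_diagonal, ← diagonal_one]
  exact congrArg diagonal (funext fun k => inv_mul_cancel₀ (hs k))

theorem diagonal_mul_diagonal_inv {s : n → ℝ} (hs : ∀ i, s i ≠ 0) :
    diagonal s * diagonal (fun k => (s k)⁻¹) = 1 := by
  rw [diagonal_mul_diagonal, ← diagonal_one]
  exact congrArg diagonal (funext fun k => mul_inv_cancel₀ (hs k))

theorem diagonal_mul_mul_diagonal_inv_apply_nonpos {M : Matrix n n ℝ}
    {s : n → ℝ} (hs : ∀ i, 0 < s i) {i j : n} (hij : M i j ≤ 0) :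
    (diagonal s * M * diagonal fun k => (s k)⁻¹) i j ≤ 0 := by
  rw [mul_diagonal, diagonal_mul]
  exact mul_nonpos_of_nonpos_of_nonneg (mul_nonpos_of_nonneg_of_nonpos (hs i).le hij)
    (inv_nonneg.mpr (hs j).le)

end Similarity

section EigenvalueSet

variable {K : ℕ} {P Q : Matrix (Fin K) (Fin K) ℝ}

theorem eigenvalueSet_subset_conj (hQP : Q * P = 1) (M : Matrix (Fin K) (Fin K) ℝ) :
    eigenvalueSet M ⊆ eigenvalueSet (P * M * Q) := fun _ ⟨v, hv, h⟩ =>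
  ⟨P *ᵥ v, mulVec_ne_zero_of_mul_eq_one hQP hv, conj_mulVec_mulVec_eq_smul hQP h⟩

theorem eigenvalueSet_conj (hQP : Q * P = 1) (hPQ : P * Q = 1) (M : Matrix (Fin K) (Fin K) ℝ) :
    eigenvalueSet (P * M * Q) = eigenvalueSet M := by
  refine Set.Subset.antisymm ?_ (eigenvalueSet_subset_conj hQP M)
  have hM : Q * (P * M * Q) * P = M := by
    rw [← Matrix.mul_assoc, ← Matrix.mul_assoc, hQP, Matrix.one_mul, Matrix.mul_assoc, hQP,
      Matrix.mul_one]
  simpa only [hM] using eigenvalueSet_subset_conj hPQ (P * M * Q)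

end EigenvalueSet

theorem aligned_disc_left_ends_give_lambda_min_general
    {K : ℕ} (hK : 0 < K) (M : Matrix (Fin K) (Fin K) ℝ)
    (hoff : ∀ i j, i ≠ j → M i j ≤ 0)
    (s : Fin K → ℝ) (hs : ∀ i, 0 < s i) (lam : ℝ)
    (halign : ∀ i,
      (Matrix.diagonal s * M * Matrix.diagonal fun k => (s k)⁻¹) i i -
          ∑ j ∈ Finset.univ.erase i,
            |(Matrix.diagonal s * M * Matrix.diagonal fun k => (s k)⁻¹) i j| =
        lam) :
    IsLeast (eigenvalueSet M) lam := by
  have : Nonempty (Fin K) := Fin.pos_iff_nonempty.mp hK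
  set B := diagonal s * M * diagonal fun k => (s k)⁻¹
  have hspec : eigenvalueSet B = eigenvalueSet M :=
    eigenvalueSet_conj (diagonal_inv_mul_diagonal fun i => (hs i).ne')
      (diagonal_mul_diagonal_inv fun i => (hs i).ne') M
  have hBoff : ∀ i j, i ≠ j → B i j ≤ 0 :=
    fun i j hij => diagonal_mul_mul_diagonal_inv_apply_nonpos hs (hoff i j hij)
  rw [← hspec]
  refine ⟨⟨1, one_ne_zero, mulVec_one_eq_smul_of_diag_sub_sum_abs_eq hBoff halign⟩, ?_⟩
  rintro μ ⟨v, hv, h⟩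
  obtain ⟨i, hi⟩ := exists_diag_sub_sum_abs_le_of_mulVec_eq_smul hv h
  exact halign i ▸ hi

/-- Exactness claim underlying Theorem 1: if `M` is real symmetric with
nonpositive off-diagonal entries and there exist strictly positive scalars
`s` such that all Gershgorin disc left-ends of `B = S M S⁻¹` are aligned at
`lam`, then `lam` is exactly the smallest eigenvalue of `M`. -/
theorem aligned_disc_left_ends_give_lambda_min
    {K : ℕ} (hK : 0 < K) (M : Matrix (Fin K) (Fin K) ℝ) (hsym : M.IsSymm)
    (hoff : ∀ i j, i ≠ j → M i j ≤ 0)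
    (s : Fin K → ℝ) (hs : ∀ i, 0 < s i) (lam : ℝ)
    (halign : ∀ i,
      (Matrix.diagonal s * M * Matrix.diagonal fun k => (s k)⁻¹) i i -
          ∑ j ∈ Finset.univ.erase i,
            |(Matrix.diagonal s * M * Matrix.diagonal fun k => (s k)⁻¹) i j| =
        lam) :
    IsLeast (eigenvalueSet M) lam :=
  aligned_disc_left_ends_give_lambda_min_general hK M hoff s hs lam halign
end
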